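/- Every abelian subgroup H of the wreathed 2-group W that is not contained in the base subgroup A satisfies |H| ≤ 2^{n+1}; consequently A is the unique abelian subgroup of W of order 2^{2n}. -/

import Mathlib

namespace Wreathed

/-- The cyclic group of order `2^n`. -/
abbrev C (n : ℕ) : Type := Multiplicative (ZMod (2^n))

/-- The coordinate-swapping automorphism of `C n × C n`. -/
def swapAut (n : ℕ) : MulAut (C n × C n) := MulEquiv.prodComm

lemma swapAut_mul_self (n : ℕ) : swapAut n * swapAut n = 1 := by
  ext x <;> rfl

lemma two_cases (x : Multiplicative (ZMod 2)) :
    x = 1 ∨ x = Multiplicative.ofAdd 1 := by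
  revert x; decide

/-- The action of `C_2` on `C n × C n` by swapping the two coordinates. -/
def act (n : ℕ) : Multiplicative (ZMod 2) →* MulAut (C n × C n) where
  toFun x := if x = 1 then 1 else swapAut n
  map_one' := if_pos rfl
  map_mul' := by
    have h11 : (Multiplicative.ofAdd 1 : Multiplicative (ZMod 2)) *
        Multiplicative.ofAdd 1 = 1 := by decide
    have h1ne : (Multiplicative.ofAdd 1 : Multiplicative (ZMod 2)) ≠ 1 := by decide
    intro x y
    rcases two_cases x with hx | hx <;> rcases two_cases y with hy | hy <;>
      subst hx <;> subst hy <;>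
      simp [h11, h1ne, swapAut_mul_self]

/-- The wreathed 2-group `W = (C_{2^n} × C_{2^n}) ⋊ C_2`,
i.e. the wreath product `Z_{2^n} ≀ Z_2`. -/
abbrev W (n : ℕ) : Type := (C n × C n) ⋊[act n] (Multiplicative (ZMod 2))

/-- The element `a = ((g,1); 0)`. -/
def a (n : ℕ) : W n := SemidirectProduct.inl (Multiplicative.ofAdd 1, 1)

/-- The element `b = ((1,g); 0)`. -/
def b (n : ℕ) : W n := SemidirectProduct.inl (1, Multiplicative.ofAdd 1)

/-- The element `t = ((1,1); 1)`. -/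
def t (n : ℕ) : W n := SemidirectProduct.inr (Multiplicative.ofAdd 1)

/-- The base subgroup `A = ⟨a, b⟩`. -/
def A (n : ℕ) : Subgroup (W n) := Subgroup.closure {a n, b n}

/-- The diagonal `Δ = ⟨ab⟩`. -/
def diag (n : ℕ) : Subgroup (W n) := Subgroup.zpowers (a n * b n)

/-- The anti-diagonal `Δ⁻ = ⟨ab⁻¹⟩`. -/
def antidiag (n : ℕ) : Subgroup (W n) := Subgroup.zpowers (a n * (b n)⁻¹)

end Wreathed

/-!
An element `w ∈ W` outside the base `A` acts on `A` by swapping the two coordinates, so the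
elements of `A` commuting with `w` are the diagonal ones. Hence an abelian `H ⊄ A` meets `A`
inside the diagonal `Δ ≅ C_{2^n}`, and since `A` has index 2, `|H| ≤ 2 · 2^n`. For `n ≥ 2` this
is less than `2^{2n} = |A|`, so an abelian subgroup of order `2^{2n}` lies in `A` and equals it.
-/

theorem Subgroup.card_eq_card_inf_ker_mul_card_map {G Q : Type*} [Group G] [Group Q]
    (f : G →* Q) (H : Subgroup G) :
    Nat.card H = Nat.card ↥(H ⊓ f.ker) * Nat.card (H.map f) := by
  rw [← Subgroup.relIndex_bot_left,
    ← Subgroup.relIndex_mul_relIndex ⊥ (H ⊓ f.ker) H bot_le inf_le_left,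
    Subgroup.relIndex_bot_left, Subgroup.inf_relIndex_left, Subgroup.relIndex_ker]

theorem ZMod.ofAdd_one_pow_val {m : ℕ} [NeZero m] (u : Multiplicative (ZMod m)) :
    Multiplicative.ofAdd (1 : ZMod m) ^ (Multiplicative.toAdd u).val = u := by
  rw [← ofAdd_nsmul, nsmul_one, ZMod.natCast_zmod_val, ofAdd_toAdd]

namespace SemidirectProduct

section

variable {N G : Type*} [Group N] [Group G] {φ : G →* MulAut N}

theorem eq_inl_left_of_right_eq_one {x : N ⋊[φ] G} (hx : x.right = 1) : x = inl x.left := by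
  ext <;> simp [hx]

theorem card_ker_rightHom : Nat.card (rightHom : N ⋊[φ] G →* G).ker = Nat.card N := by
  rw [← range_inl_eq_ker_rightHom]
  exact (Nat.card_congr (MonoidHom.ofInjective inl_injective).toEquiv).symm

end

theorem act_left_eq_of_commute {N G : Type*} [CommGroup N] [Group G] {φ : G →* MulAut N}
    {x w : N ⋊[φ] G} (hx : x.right = 1) (hxw : Commute x w) : φ w.right x.left = x.left := by
  have h := congrArg SemidirectProduct.left hxw.eq
  simp only [mul_left, hx, map_one, MulAut.one_apply] at h
  exact mul_left_cancel (h.symm.trans (mul_comm _ _))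

end SemidirectProduct

namespace Wreathed

open SemidirectProduct Multiplicative

variable {n : ℕ}

theorem inl_mem_A (p : C n × C n) : (inl p : W n) ∈ A n := by
  have hp : p = ((ofAdd 1, 1) : C n × C n) ^ (toAdd p.1).val *
      (1, ofAdd 1) ^ (toAdd p.2).val := by
    simp [ZMod.ofAdd_one_pow_val]
  rw [hp, map_mul, map_pow, map_pow]
  exact mul_mem (pow_mem (Subgroup.subset_closure (by simp [a])) _)
    (pow_mem (Subgroup.subset_closure (by simp [b])) _)

theorem A_eq_ker_rightHom : A n = (rightHom : W n →* Multiplicative (ZMod 2)).ker := by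
  refine le_antisymm ?_ fun x hx => ?_
  · rw [A, Subgroup.closure_le]
    rintro x (rfl | rfl) <;> rfl
  · rw [eq_inl_left_of_right_eq_one hx]
    exact inl_mem_A _

theorem act_ofAdd_one : act n (ofAdd 1) = swapAut n := by
  simp [act]

theorem right_eq_ofAdd_one_of_notMem_A {w : W n} (hw : w ∉ A n) : w.right = ofAdd 1 :=
  (two_cases w.right).resolve_left fun h => hw (A_eq_ker_rightHom ▸ h)

theorem inl_mk_self_mem_diag (u : C n) : (inl (u, u) : W n) ∈ diag n := by
  have hu : (inl (u, u) : W n) = (a n * b n) ^ (toAdd u).val := by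
    simp [a, b, ← map_mul, ← map_pow, ZMod.ofAdd_one_pow_val]
  rw [hu]
  exact Subgroup.npow_mem_zpowers _ _

theorem inf_A_le_diag {H : Subgroup (W n)} [IsMulCommutative H] {w : W n} (hwH : w ∈ H)
    (hwA : w ∉ A n) : H ⊓ A n ≤ diag n := by
  rintro x ⟨hxH, hxA⟩
  rw [A_eq_ker_rightHom] at hxA
  have hfix := act_left_eq_of_commute hxA (setLike_mul_comm hxH hwH)
  rw [right_eq_ofAdd_one_of_notMem_A hwA, act_ofAdd_one] at hfix
  have hdiag : x.left = (x.left.1, x.left.1) := Prod.ext rfl (congrArg Prod.fst hfix)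
  rw [eq_inl_left_of_right_eq_one hxA, hdiag]
  exact inl_mk_self_mem_diag _

theorem card_diag : Nat.card (diag n) = 2 ^ n := by
  rw [diag, Nat.card_zpowers, a, b, ← map_mul, orderOf_injective _ inl_injective,
    Prod.mk_mul_mk, mul_one, one_mul, Prod.orderOf, Nat.lcm_self, orderOf_ofAdd_eq_addOrderOf,
    ZMod.addOrderOf_one]

theorem card_A : Nat.card (A n) = 2 ^ (2 * n) := by
  rw [A_eq_ker_rightHom, card_ker_rightHom, Nat.card_prod,
    show Nat.card (C n) = 2 ^ n from Nat.card_zmod _, ← pow_add, two_mul]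

instance : Finite (W n) :=
  Finite.of_equiv _ equivProd.symm

theorem card_le_two_pow_succ_of_not_le_A {H : Subgroup (W n)} [IsMulCommutative H]
    (hH : ¬ H ≤ A n) : Nat.card H ≤ 2 ^ (n + 1) := by
  obtain ⟨w, hwH, hwA⟩ := SetLike.not_le_iff_exists.mp hH
  have hbase : Nat.card ↥(H ⊓ A n) ≤ 2 ^ n :=
    (Subgroup.card_le_of_le (inf_A_le_diag hwH hwA)).trans_eq card_diag
  have hquot : Nat.card (H.map (rightHom : W n →* Multiplicative (ZMod 2))) ≤ 2 :=
    (Subgroup.card_le_card_group _).trans_eq (Nat.card_zmod 2)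
  calc Nat.card H
      = Nat.card ↥(H ⊓ A n) * Nat.card (H.map (rightHom : W n →* Multiplicative (ZMod 2))) := by
        rw [A_eq_ker_rightHom]; exact Subgroup.card_eq_card_inf_ker_mul_card_map _ _
    _ ≤ 2 ^ n * 2 := Nat.mul_le_mul hbase hquot
    _ = 2 ^ (n + 1) := (pow_succ 2 n).symm

end Wreathed

open Wreathed in
/-- Every abelian subgroup of the wreathed 2-group not contained in the base subgroup `A`
has order at most `2^{n+1}`; consequently `A` is the unique abelian subgroup
of order `2^{2n}`. -/
theorem abelian_subgroups_wreathed (n : ℕ) (hn : 2 ≤ n) :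
    (∀ H : Subgroup (W n), IsMulCommutative ↥H → ¬ H ≤ A n →
        Nat.card ↥H ≤ 2 ^ (n + 1)) ∧
      (∀ H : Subgroup (W n), IsMulCommutative ↥H → Nat.card ↥H = 2 ^ (2 * n) → H = A n) := by
  refine ⟨fun H _ hH => card_le_two_pow_succ_of_not_le_A hH, fun H _ hcard => ?_⟩
  have hle : H ≤ A n := by
    by_contra hH
    have hsmall := card_le_two_pow_succ_of_not_le_A hH
    rw [hcard] at hsmall
    exact hsmall.not_gt (Nat.pow_lt_pow_right one_lt_two (by omega))
  exact Subgroup.eq_of_le_of_card_ge hle (by rw [hcard, card_A])
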